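/- arXiv:1008.2377 — 5 statements merged into one kernel-verified Lean document; each statement's English description precedes it below -/
import Mathlib

section
/- Let d and b_1,...,b_8 be integers with b_i ≥ -1, such that d^2 = (∑_{i=1}^8 b_i^2) - 1 and 3d = (∑_{i=1}^8 b_i) + 1 (the numerical conditions for a (-1)-class on the blow-up of P^2 at 8 points). If d ≥ 1 then d ≤ 6. -/
/-! The defect in Cauchy–Schwarz is a sum of squares: `∑ (8 bᵢ - (3d - 1))² = 8 (7 - d)(d + 1)`.
Hence `d ≤ 7`, and for `d = 7` every `8 bᵢ` would equal `20`, which no integer allows. -/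

open Finset

theorem Finset.sum_sq_card_mul_sub_sum {ι R : Type*} [CommRing R] (s : Finset ι) (f : ι → R) :
    ∑ i ∈ s, (#s * f i - ∑ j ∈ s, f j) ^ 2 =
      #s * (#s * ∑ i ∈ s, f i ^ 2 - (∑ i ∈ s, f i) ^ 2) := by
  simp only [sub_sq, sum_add_distrib, sum_sub_distrib, mul_pow, ← mul_sum, ← sum_mul,
    sum_const, nsmul_eq_mul]
  ring

theorem stmt_0_general (d : ℤ) (b : Fin 8 → ℤ)
    (h1 : d ^ 2 = (∑ i, (b i) ^ 2) - 1) (h2 : 3 * d = (∑ i, b i) + 1) : d ≤ 6 := by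
  have defect : ∑ i, (8 * b i - (3 * d - 1)) ^ 2 = 8 * ((7 - d) * (d + 1)) := by
    have h := sum_sq_card_mul_sub_sum univ b
    rw [card_univ, Fintype.card_fin, eq_sub_of_add_eq h2.symm,
      eq_add_of_sub_eq h1.symm] at h
    push_cast at h
    linear_combination h
  have hsq : 0 ≤ ∑ i, (8 * b i - (3 * d - 1)) ^ 2 := sum_nonneg fun i _ => sq_nonneg _
  have hd7 : d ≤ 7 := by nlinarith
  obtain hd | rfl := hd7.lt_or_eq
  · omega
  norm_num at defect
  have hb0 := (sum_eq_zero_iff_of_nonneg fun i _ => sq_nonneg _).1 defect 0 (mem_univ 0)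
  have := pow_eq_zero_iff two_ne_zero |>.1 hb0
  omega

/-- Numerical classification step for (-1)-classes on the blow-up of P^2 at 8 points:
if `d^2 = (∑ b_i^2) - 1` and `3d = (∑ b_i) + 1` with `b_i ≥ -1` and `d ≥ 1`, then `d ≤ 6`. -/
theorem stmt_0 (d : ℤ) (b : Fin 8 → ℤ) (hb : ∀ i, -1 ≤ b i)
    (h1 : d ^ 2 = (∑ i, (b i) ^ 2) - 1) (h2 : 3 * d = (∑ i, b i) + 1)
    (hd : 1 ≤ d) : d ≤ 6 :=
  stmt_0_general d b h1 h2
end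

section
/- Let d and b_1,...,b_8 be nonnegative integers with d ≥ 1, d^2 = (∑_{i=1}^8 b_i^2) - 1 and 3d = (∑_{i=1}^8 b_i) + 1. Then, up to permutation of the b_i, the tuple (d; b_1,...,b_8) is one of: (1; 0,0,0,0,0,0,1,1), (2; 0,0,0,1,1,1,1,1), (3; 0,1,1,1,1,1,1,2), (4; 1,1,1,1,1,2,2,2), (5; 1,1,2,2,2,2,2,2), (6; 2,2,2,2,2,2,2,3). -/
/-!
Write `E = d E₀ - ∑ bᵢ Eᵢ` and `K = -3 E₀ + ∑ Eᵢ`, so that `E² = K·E = -1` and `K² = 1`. The class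
`3E + dK = -∑ (3bᵢ - d) Eᵢ` has no `E₀`-component, and computing its square in two ways gives
`∑ (3bᵢ - d)² + (d - 3)² = 18`. Hence `d ≤ 7` and every `bᵢ ≤ 3`. The numbers of `bᵢ` equal to
`0, 1, 2, 3` then satisfy three linear equations, which for each `d ≤ 7` have at most one solution,
and a tuple is determined up to permutation by these numbers.
-/

open Finset

theorem sum_comp_eq_sum_range_card_fiber_nsmul {ι M : Type*} [Fintype ι] [AddCommMonoid M]
    {N : ℕ} (b : ι → ℕ) (hb : ∀ i, b i < N) (f : ℕ → M) :
    ∑ i, f (b i) = ∑ j ∈ range N, #{i | b i = j} • f j := by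
  rw [← sum_fiberwise_of_maps_to' (t := range N) fun i _ ↦ mem_range.2 (hb i)]
  simp only [sum_const]

theorem Tuple.comp_sort_eq_of_card_fiber_eq {n : ℕ} {α : Type*} [LinearOrder α]
    (f g : Fin n → α) (hg : Monotone g) (h : ∀ a, #{i | f i = a} = #{i | g i = a}) :
    f ∘ Tuple.sort f = g := by
  let σ : Fin n ≃ Fin n := Equiv.ofFiberEquiv (f := g) (g := f) fun a ↦
    Fintype.equivOfCardEq (by rw [Fintype.card_subtype, Fintype.card_subtype, h])
  have hσ : f ∘ σ = g := funext (Equiv.ofFiberEquiv_map _)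
  rw [← hσ] at hg ⊢
  exact (Tuple.comp_sort_eq_comp_iff_monotone.2 hg).symm

theorem Tuple.comp_sort_eq_of_card_fiber_eq_of_lt {n N : ℕ} (f g : Fin n → ℕ) (hg : Monotone g)
    (hf : ∀ i, f i < N) (hgN : ∀ i, g i < N) (h : ∀ k < N, #{i | f i = k} = #{i | g i = k}) :
    f ∘ Tuple.sort f = g := by
  refine Tuple.comp_sort_eq_of_card_fiber_eq f g hg fun k ↦ ?_
  by_cases hk : k < N
  · exact h k hk
  · have hempty (u : Fin n → ℕ) (hu : ∀ i, u i < N) : #{i | u i = k} = 0 :=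
      card_eq_zero.2 <| filter_eq_empty_iff.2 fun i _ ↦ ((hu i).trans_le (not_lt.1 hk)).ne
    rw [hempty f hf, hempty g hgN]

/-- `d E₀ - ∑ bᵢ Eᵢ` has square `-1` and anticanonical degree `1`. -/
def IsMinusOneClass (d : ℕ) (b : Fin 8 → ℕ) : Prop :=
  d ^ 2 + 1 = ∑ i, b i ^ 2 ∧ 3 * d = ∑ i, b i + 1

namespace IsMinusOneClass

variable {d : ℕ} {b : Fin 8 → ℕ}

theorem sum_sq_three_mul_sub_add_sq (h : IsMinusOneClass d b) :
    ∑ i, (3 * (b i : ℤ) - d) ^ 2 + ((d : ℤ) - 3) ^ 2 = 18 := by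
  obtain ⟨h1, h2⟩ := h
  zify at h1 h2
  simp only [Fin.sum_univ_eight] at *
  linear_combination (-9) * h1 + 6 * (d : ℤ) * h2

theorem le_seven (h : IsMinusOneClass d b) : d ≤ 7 := by
  have hsum := h.sum_sq_three_mul_sub_add_sq
  have hnonneg : 0 ≤ ∑ i, (3 * (b i : ℤ) - d) ^ 2 := sum_nonneg fun i _ ↦ sq_nonneg _
  nlinarith

theorem lt_four (h : IsMinusOneClass d b) (i : Fin 8) : b i < 4 := by
  have hsum := h.sum_sq_three_mul_sub_add_sq
  have hi : (3 * (b i : ℤ) - d) ^ 2 ≤ ∑ j, (3 * (b j : ℤ) - d) ^ 2 :=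
    single_le_sum (f := fun j ↦ (3 * (b j : ℤ) - d) ^ 2) (fun j _ ↦ sq_nonneg _) (mem_univ i)
  have hd : (d : ℤ) ≤ 7 := mod_cast h.le_seven
  nlinarith [sq_nonneg ((d : ℤ) - 3)]

theorem card_fiber_equations (h : IsMinusOneClass d b) :
    #{i | b i = 0} + #{i | b i = 1} + #{i | b i = 2} + #{i | b i = 3} = 8 ∧
      #{i | b i = 1} + 2 * #{i | b i = 2} + 3 * #{i | b i = 3} + 1 = 3 * d ∧
      d ^ 2 + 1 = #{i | b i = 1} + 4 * #{i | b i = 2} + 9 * #{i | b i = 3} := by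
  have hcard := sum_comp_eq_sum_range_card_fiber_nsmul b h.lt_four fun _ ↦ 1
  have hsum := sum_comp_eq_sum_range_card_fiber_nsmul b h.lt_four id
  have hsq := sum_comp_eq_sum_range_card_fiber_nsmul b h.lt_four (· ^ 2)
  norm_num [sum_range_succ] at hcard hsum hsq
  obtain ⟨h1, h2⟩ := h
  omega

end IsMinusOneClass

theorem stmt_1_general (d : ℕ) (b : Fin 8 → ℕ)
    (h1 : d ^ 2 + 1 = ∑ i, (b i) ^ 2) (h2 : 3 * d = (∑ i, b i) + 1) :
    ∃ σ : Equiv.Perm (Fin 8),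
      (d = 1 ∧ b ∘ σ = ![0, 0, 0, 0, 0, 0, 1, 1]) ∨
      (d = 2 ∧ b ∘ σ = ![0, 0, 0, 1, 1, 1, 1, 1]) ∨
      (d = 3 ∧ b ∘ σ = ![0, 1, 1, 1, 1, 1, 1, 2]) ∨
      (d = 4 ∧ b ∘ σ = ![1, 1, 1, 1, 1, 2, 2, 2]) ∨
      (d = 5 ∧ b ∘ σ = ![1, 1, 2, 2, 2, 2, 2, 2]) ∨
      (d = 6 ∧ b ∘ σ = ![2, 2, 2, 2, 2, 2, 2, 3]) := by
  have h : IsMinusOneClass d b := ⟨h1, h2⟩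
  obtain ⟨hcard, hsum, hsq⟩ := h.card_fiber_equations
  have hd := h.le_seven
  refine ⟨Tuple.sort b, ?_⟩
  interval_cases d <;> norm_num
  -- no fiber counts fit `d = 0` or `d = 7`
  all_goals try omega
  all_goals
    refine Tuple.comp_sort_eq_of_card_fiber_eq_of_lt b _ (by decide) h.lt_four (by decide)
      fun k hk ↦ ?_
    interval_cases k <;>
      conv_rhs => simp only [card_filter, Fin.sum_univ_eight, Matrix.cons_val]; norm_num
    all_goals omega

/-- Complete numerical classification of (-1)-curve classes `dE_0 - ∑ b_i E_i`
on the blow-up of P^2 at 8 points with `d ≥ 1`. -/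
theorem stmt_1 (d : ℕ) (b : Fin 8 → ℕ) (hd : 1 ≤ d)
    (h1 : d ^ 2 + 1 = ∑ i, (b i) ^ 2) (h2 : 3 * d = (∑ i, b i) + 1) :
    ∃ σ : Equiv.Perm (Fin 8),
      (d = 1 ∧ b ∘ σ = ![0, 0, 0, 0, 0, 0, 1, 1]) ∨
      (d = 2 ∧ b ∘ σ = ![0, 0, 0, 1, 1, 1, 1, 1]) ∨
      (d = 3 ∧ b ∘ σ = ![0, 1, 1, 1, 1, 1, 1, 2]) ∨
      (d = 4 ∧ b ∘ σ = ![1, 1, 1, 1, 1, 2, 2, 2]) ∨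
      (d = 5 ∧ b ∘ σ = ![1, 1, 2, 2, 2, 2, 2, 2]) ∨
      (d = 6 ∧ b ∘ σ = ![2, 2, 2, 2, 2, 2, 2, 3]) :=
  stmt_1_general d b h1 h2
end

section
/- For every integer t ≥ 6, with m = ⌈5t/3⌉ - 1, the inequality C(m+3, 3) - 5·C(m-t+3, 3) ≥ C(m+2, 3) - 5·C(m-t+2, 3) holds, where C(n,k) denotes the binomial coefficient. -/
/-!
The Pascal rule `C(n+3,3) - C(n+2,3) = C(n+2,2)` turns the claim into `5·C(m-t+2,2) ≤ C(m+2,2)`,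
a quadratic inequality in `t`. Writing `t = 3k + i` with `i < 3`, one has `m + 1 = 5k + 2i` and
`m - t + 1 = 2k + i`, and in each case the inequality follows from `k ≥ 2`.
-/

theorem Nat.two_mul_choose_two_succ (n : ℕ) : 2 * (n + 1).choose 2 = (n + 1) * n := by
  have h := Nat.add_one_mul_choose_eq n 1
  rw [Nat.choose_one_right] at h
  rw [h, mul_comm]

theorem five_mul_ceil_sub_mul_le (t : ℕ) (ht : 6 ≤ t) :
    5 * (((5 * t + 2) / 3 - t + 1) * ((5 * t + 2) / 3 - t)) ≤
      ((5 * t + 2) / 3 + 1) * ((5 * t + 2) / 3) := by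
  obtain ⟨k, rfl | rfl | rfl⟩ : ∃ k, t = 3 * k ∨ t = 3 * k + 1 ∨ t = 3 * k + 2 :=
    ⟨t / 3, by omega⟩
  all_goals have hk : 2 ≤ k := by omega
  · rw [show (5 * (3 * k) + 2) / 3 = 5 * k by omega, show 5 * k - 3 * k = 2 * k by omega]
    nlinarith
  · rw [show (5 * (3 * k + 1) + 2) / 3 = 5 * k + 2 by omega,
      show 5 * k + 2 - (3 * k + 1) = 2 * k + 1 by omega]
    nlinarith
  · rw [show (5 * (3 * k + 2) + 2) / 3 = 5 * k + 4 by omega,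
      show 5 * k + 4 - (3 * k + 2) = 2 * k + 2 by omega]
    nlinarith

theorem five_mul_choose_two_ceil_sub_le (t : ℕ) (ht : 6 ≤ t) :
    5 * ((5 * t + 2) / 3 - t + 1).choose 2 ≤ ((5 * t + 2) / 3 + 1).choose 2 := by
  apply Nat.le_of_mul_le_mul_left _ two_pos
  rw [mul_left_comm, Nat.two_mul_choose_two_succ, Nat.two_mul_choose_two_succ]
  exact five_mul_ceil_sub_mul_le t ht

theorem Nat.cast_choose_three_succ_sub (n : ℕ) :
    ((n + 3).choose 3 : ℤ) - (n + 2).choose 3 = (n + 2).choose 2 := by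
  rw [Nat.choose_succ_succ' (n + 2) 2]
  push_cast
  ring

/-- For `t ≥ 6` and `m = ⌈5t/3⌉ - 1`,
`C(m+3,3) - 5·C(m-t+3,3) ≥ C(m+2,3) - 5·C(m-t+2,3)`. -/
theorem stmt_3 (t : ℕ) (ht : 6 ≤ t) (m : ℕ) (hm : m = (5 * t + 2) / 3 - 1) :
    ((m + 3).choose 3 : ℤ) - 5 * ((m - t + 3).choose 3) ≥
      ((m + 2).choose 3 : ℤ) - 5 * ((m - t + 2).choose 3) := by
  have key := five_mul_choose_two_ceil_sub_le t ht
  rw [show (5 * t + 2) / 3 - t + 1 = m - t + 2 by omega,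
    show (5 * t + 2) / 3 + 1 = m + 2 by omega] at key
  have key' : (5 * (m - t + 2).choose 2 : ℤ) ≤ (m + 2).choose 2 := by exact_mod_cast key
  linarith [Nat.cast_choose_three_succ_sub m, Nat.cast_choose_three_succ_sub (m - t)]
end

section
/- For every integer k ≥ 2, the quantity α = ∑_{j=0}^{k-1} (-1)^{j+1} (k-j)^{2k-2} · C(2k+1, j) is positive. -/
/-!
With `n = 2k - 2`, Pascal's rule applied twice turns `-α` into the second difference
`A(n, k-1) - 2 A(n, k-2) + A(n, k-3)` of the Eulerian numbers, via their explicit formula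
`A(n, m) = ∑_{j ≤ m} (-1)^j C(n+1, j) (m+1-j)^n`. The symmetry `A(n, m) = A(n, n-1-m)` gives
`A(n, k-1) = A(n, k-2)`, so `α = A(n, k-2) - A(n, k-3)`, which is positive because Eulerian numbers
increase strictly up to the middle of their row.
-/

open Finset

/-- Eulerian numbers `A(n, m)`, the number of permutations of `n` letters with `m` descents. -/
def eulerian : ℕ → ℕ → ℕ
  | _, 0 => 1
  | 0, _ + 1 => 0
  | n + 1, m + 1 => (m + 2) * eulerian n (m + 1) + (n - m) * eulerian n m

@[simp]
lemma eulerian_zero_right (n : ℕ) : eulerian n 0 = 1 := by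
  cases n <;> rfl

lemma eulerian_succ_succ (n m : ℕ) :
    eulerian (n + 1) (m + 1) = (m + 2) * eulerian n (m + 1) + (n - m) * eulerian n m :=
  rfl

lemma eulerian_eq_zero_of_lt {n m : ℕ} (h : n < m) : eulerian n m = 0 := by
  induction n generalizing m with
  | zero => obtain ⟨m, rfl⟩ := Nat.exists_eq_succ_of_ne_zero h.ne'; rfl
  | succ n ih =>
    obtain ⟨m, rfl⟩ := Nat.exists_eq_succ_of_ne_zero (Nat.ne_zero_of_lt h)
    rw [eulerian_succ_succ, ih (by omega), ih (by omega)]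
    ring

lemma eulerian_self {n : ℕ} (hn : 0 < n) : eulerian n n = 0 := by
  obtain ⟨n, rfl⟩ := Nat.exists_eq_succ_of_ne_zero hn.ne'
  rw [eulerian_succ_succ, eulerian_eq_zero_of_lt (Nat.lt_succ_self n), Nat.sub_self]
  ring

lemma eulerian_symm {n a b : ℕ} (h : a + b + 1 = n) : eulerian n a = eulerian n b := by
  induction n generalizing a b with
  | zero => omega
  | succ n ih =>
    have edge : eulerian (n + 1) n = 1 := by
      rcases n with _ | n
      · rfl
      · rw [eulerian_succ_succ, eulerian_self n.succ_pos, ← ih (by omega : 0 + n + 1 = n + 1)]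
        simp
    match a, b with
    | 0, b => rw [show b = n by omega, edge, eulerian_zero_right]
    | a + 1, 0 => rw [show a + 1 = n by omega, edge, eulerian_zero_right]
    | a + 1, b + 1 =>
      rw [eulerian_succ_succ, eulerian_succ_succ, ih (by omega : a + 1 + b + 1 = n),
        ih (by omega : a + (b + 1) + 1 = n), show n - a = b + 2 by omega,
        show n - b = a + 2 by omega]
      ring

lemma eulerian_lt_eulerian_succ {n m : ℕ} (h : 2 * m + 3 ≤ n) :
    eulerian n m < eulerian n (m + 1) := by
  induction n generalizing m with
  | zero => omega
  | succ n ih =>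
    rcases m with _ | m
    · rw [eulerian_succ_succ, eulerian_zero_right, eulerian_zero_right]
      omega
    · have hlt : eulerian n m < eulerian n (m + 1) := ih (by omega)
      have hle : eulerian n (m + 1) ≤ eulerian n (m + 2) := by
        rcases (show 2 * m + 4 ≤ n by omega).eq_or_lt with _ | _
        · exact (eulerian_symm (by omega)).le
        · exact (ih (by omega)).le
      obtain ⟨t, rfl⟩ : ∃ t, n = m + t + 4 := ⟨n - m - 4, by omega⟩
      rw [eulerian_succ_succ _ m, eulerian_succ_succ _ (m + 1),
        show m + t + 4 - m = t + 4 by omega, show m + t + 4 - (m + 1) = t + 3 by omega]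
      nlinarith

/-- The coefficient of `t ^ m` in `(1 - t) ^ N * ∑ i, (i + 1) ^ n * t ^ i`. -/
def altChooseSum (N n m : ℕ) : ℤ :=
  ∑ j ∈ range (m + 1), (-1) ^ j * ((m : ℤ) + 1 - j) ^ n * N.choose j

@[simp]
lemma altChooseSum_zero_right (N n : ℕ) : altChooseSum N n 0 = 1 := by
  simp [altChooseSum]

lemma altChooseSum_zero_left (n m : ℕ) : altChooseSum 0 n m = ((m : ℤ) + 1) ^ n := by
  simp [altChooseSum, sum_range_succ']

lemma altChooseSum_succ_succ (N n m : ℕ) :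
    altChooseSum (N + 1) n (m + 1) = altChooseSum N n (m + 1) - altChooseSum N n m := by
  simp only [altChooseSum]
  rw [sum_range_succ' _ (m + 1), sum_range_succ' (fun j => _ * (N.choose j : ℤ)) (m + 1),
    eq_sub_iff_add_eq, add_right_comm, ← sum_add_distrib]
  congr 1
  · refine sum_congr rfl fun i _ => ?_
    push_cast [Nat.choose_succ_succ']
    ring
  · simp

-- Write `m + 2 - j = (m + 2) - j` and absorb: `j * C(N + 1, j) = (N + 1) * C(N, j - 1)`.
lemma altChooseSum_succ_pow (N n m : ℕ) :
    altChooseSum (N + 1) (n + 1) (m + 1) =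
      (m + 2) * altChooseSum (N + 1) n (m + 1) + (N + 1) * altChooseSum N n m := by
  simp only [altChooseSum]
  rw [sum_range_succ', sum_range_succ' _ (m + 1), mul_add, mul_sum, mul_sum, add_right_comm,
    ← sum_add_distrib]
  congr 1
  · refine sum_congr rfl fun i _ => ?_
    have absorb : ((N : ℤ) + 1) * N.choose i = (N + 1).choose (i + 1) * ((i : ℤ) + 1) := by
      exact_mod_cast Nat.add_one_mul_choose_eq N i
    push_cast
    linear_combination -(-1 : ℤ) ^ i * ((m : ℤ) + 1 - i) ^ n * absorb
  · push_cast
    ring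

lemma altChooseSum_add_two (N n m : ℕ) :
    altChooseSum (N + 2) n (m + 2) =
      altChooseSum N n (m + 2) - 2 * altChooseSum N n (m + 1) + altChooseSum N n m := by
  simp only [altChooseSum_succ_succ]
  ring

lemma altChooseSum_eq_eulerian (n m : ℕ) : altChooseSum (n + 1) n m = eulerian n m := by
  induction n generalizing m with
  | zero =>
    rcases m with _ | m
    · simp
    · simp [altChooseSum_succ_succ, altChooseSum_zero_left, eulerian]
  | succ n ih =>
    rcases m with _ | m
    · simp
    rw [altChooseSum_succ_pow, altChooseSum_succ_succ, ih, ih, eulerian_succ_succ]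
    rcases le_or_gt m n with hmn | hnm
    · push_cast [Nat.cast_sub hmn]
      ring
    · rw [eulerian_eq_zero_of_lt hnm]
      push_cast
      ring

/-- For `k ≥ 2`, `α = ∑_{j=0}^{k-1} (-1)^(j+1) (k-j)^(2k-2) C(2k+1, j)` is positive. -/
theorem stmt_9 (k : ℕ) (hk : 2 ≤ k) :
    0 < ∑ j ∈ Finset.range k,
      (-1 : ℤ) ^ (j + 1) * ((k : ℤ) - j) ^ (2 * k - 2) * ((2 * k + 1).choose j) := by
  rcases hk.eq_or_lt with rfl | hk
  · simp [sum_range_succ]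
  obtain ⟨K, rfl⟩ : ∃ K, k = K + 3 := ⟨k - 3, by omega⟩
  set n := 2 * K + 4
  have hα : ∑ j ∈ range (K + 3),
        (-1 : ℤ) ^ (j + 1) * (((K + 3 : ℕ) : ℤ) - j) ^ (2 * (K + 3) - 2) *
          ((2 * (K + 3) + 1).choose j) =
      -altChooseSum (n + 1 + 2) n (K + 2) := by
    rw [altChooseSum, ← sum_neg_distrib]
    refine sum_congr rfl fun j _ => ?_
    rw [show 2 * (K + 3) - 2 = n by omega, show 2 * (K + 3) + 1 = n + 1 + 2 by omega]
    push_cast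
    ring
  have hsymm : eulerian n (K + 2) = eulerian n (K + 1) := eulerian_symm (by omega)
  have hlt : eulerian n K < eulerian n (K + 1) := eulerian_lt_eulerian_succ (by omega)
  rw [hα, altChooseSum_add_two, altChooseSum_eq_eulerian, altChooseSum_eq_eulerian,
    altChooseSum_eq_eulerian, hsymm]
  linarith [(Nat.cast_lt (α := ℤ)).mpr hlt]
end

section
/- Let t > 2k+2 and c = (t-1)(k+1) - 1. Let G_i be the set of two-row Gelfand-Tsetlin patterns (nonnegative integer 2×(2k+2) matrices with λ_{2,2k+2}=0, λ_{1,j+1} ≥ λ_{2,j}, λ_{p,j} ≥ λ_{p,j+1}) satisfying λ_{2,1} = i and λ_{1,j} + λ_{2,j} = (2k+3-j)t for all j. Then |G_{c+1}| ≤ |G_c|. -/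
/-!
Lowering the first column of a pattern in `G_{i+1}` from `(a, i + 1)` to `(a + 1, i)` is injective
and keeps every column sum and every inequality except possibly `λ₂₂ ≤ λ₂₁ = i`. The interlacing
`λ₂₂ ≤ λ₁₃ ≤ λ₁₂` and the second column sum give `2 λ₂₂ ≤ (2k+1) t`, so that inequality survives
as soon as `(2k+1) t < 2 (i + 1)`; for `i = c` this says `(2k+1) t < 2 (t-1)(k+1)`, i.e. `t > 2k+2`.
-/

/-- The set of two-row Gelfand-Tsetlin patterns (0-indexed rows and columns):
nonnegative integer `2 × (2k+2)` matrices `L` with `L 1 (2k+1) = 0`,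
`L 0 (j+1) ≥ L 1 j`, `L p j ≥ L p (j+1)`, subject to `L 1 0 = i` and the column-sum
conditions `L 0 j + L 1 j = (2k+2-j) t`. -/
def GTpat (k t i : ℕ) : Set (Fin 2 → Fin (2 * k + 2) → ℕ) :=
  {L | L 1 ⟨2 * k + 1, by omega⟩ = 0 ∧
       (∀ j : ℕ, ∀ h : j + 1 < 2 * k + 2, L 1 ⟨j, by omega⟩ ≤ L 0 ⟨j + 1, h⟩) ∧
       (∀ p : Fin 2, ∀ j : ℕ, ∀ h : j + 1 < 2 * k + 2,
          L p ⟨j + 1, h⟩ ≤ L p ⟨j, by omega⟩) ∧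
       L 1 ⟨0, by omega⟩ = i ∧
       (∀ j : ℕ, ∀ h : j < 2 * k + 2, L 0 ⟨j, h⟩ + L 1 ⟨j, h⟩ = (2 * k + 2 - j) * t)}

def lowerFirstColumn (i : ℕ) {n : ℕ} (L : Fin 2 → Fin n → ℕ) : Fin 2 → Fin n → ℕ :=
  fun p j => if j.val = 0 then (if p = 0 then L 0 j + 1 else i) else L p j

section lowerFirstColumn

variable {i n : ℕ} {L : Fin 2 → Fin n → ℕ}

@[simp]
theorem lowerFirstColumn_zero_zero (h : 0 < n) : lowerFirstColumn i L 0 ⟨0, h⟩ = L 0 ⟨0, h⟩ + 1 :=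
  rfl

@[simp]
theorem lowerFirstColumn_one_zero (h : 0 < n) : lowerFirstColumn i L 1 ⟨0, h⟩ = i :=
  rfl

@[simp]
theorem lowerFirstColumn_succ (p : Fin 2) {j : ℕ} (h : j + 1 < n) :
    lowerFirstColumn i L p ⟨j + 1, h⟩ = L p ⟨j + 1, h⟩ :=
  rfl

end lowerFirstColumn

section GTpat

variable {k t i : ℕ} {L : Fin 2 → Fin (2 * k + 2) → ℕ}

theorem GTpat_finite : (GTpat k t i).Finite := by
  refine (Set.Finite.pi fun _ => Set.Finite.pi fun _ => Set.finite_Iic ((2 * k + 2) * t)).subset ?_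
  intro L hL
  have hsum_le (j : Fin (2 * k + 2)) : L 0 j + L 1 j ≤ (2 * k + 2) * t :=
    (hL.2.2.2.2 j j.2).trans_le (Nat.mul_le_mul_right _ (Nat.sub_le _ _))
  simp only [Set.mem_pi, Set.mem_univ, Set.mem_Iic, forall_const, Fin.forall_fin_two]
  exact ⟨fun j => (Nat.le_add_right _ _).trans (hsum_le j),
    fun j => (Nat.le_add_left _ _).trans (hsum_le j)⟩

theorem two_mul_apply_one_le_of_mem_GTpat (hL : L ∈ GTpat k t i) (j : ℕ) (hj : j < 2 * k + 2) :
    2 * L 1 ⟨j, hj⟩ ≤ (2 * k + 2 - j) * t := by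
  obtain ⟨hlast, hinter, hmono, -, hsum⟩ := hL
  have := hsum j hj
  by_cases hj' : j + 1 < 2 * k + 2
  · have := hinter j hj'
    have := hmono 0 j hj'
    omega
  · obtain rfl : j = 2 * k + 1 := by omega
    simp [hlast]

theorem lowerFirstColumn_mem_GTpat (hL : L ∈ GTpat k t (i + 1)) (h11 : L 1 ⟨1, by omega⟩ ≤ i) :
    lowerFirstColumn i L ∈ GTpat k t i := by
  obtain ⟨hlast, hinter, hmono, hfirst, hsum⟩ := hL
  refine ⟨by simpa using hlast, fun j h => ?_, fun p j h => ?_, rfl, fun j h => ?_⟩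
  · rcases j with _ | j
    · simp only [lowerFirstColumn_one_zero, lowerFirstColumn_succ]
      have := hinter 0 h
      omega
    · simpa using hinter (j + 1) h
  · rcases j with _ | j
    · obtain rfl | rfl : p = 0 ∨ p = 1 := by omega
      · simp only [lowerFirstColumn_zero_zero, lowerFirstColumn_succ]
        exact (hmono 0 0 h).trans (Nat.le_succ _)
      · simpa only [lowerFirstColumn_one_zero, lowerFirstColumn_succ] using h11
    · simpa using hmono p (j + 1) h
  · rcases j with _ | j
    · simp only [lowerFirstColumn_zero_zero, lowerFirstColumn_one_zero]
      have := hsum 0 h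
      omega
    · simpa using hsum (j + 1) h

theorem lowerFirstColumn_injOn : Set.InjOn (lowerFirstColumn i) (GTpat k t (i + 1)) := by
  intro L hL M hM hLM
  funext p ⟨j, hj⟩
  have h := congrFun (congrFun hLM p) ⟨j, hj⟩
  rcases j with _ | j
  · obtain rfl | rfl : p = 0 ∨ p = 1 := by omega
    · simpa only [lowerFirstColumn_zero_zero, Nat.add_right_cancel_iff] using h
    · exact hL.2.2.2.1.trans hM.2.2.2.1.symm
  · simpa only [lowerFirstColumn_succ] using h

theorem ncard_GTpat_succ_le (h : (2 * k + 1) * t < 2 * (i + 1)) :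
    (GTpat k t (i + 1)).ncard ≤ (GTpat k t i).ncard := by
  refine Set.ncard_le_ncard_of_injOn _ (fun L hL => lowerFirstColumn_mem_GTpat hL ?_)
    lowerFirstColumn_injOn GTpat_finite
  have h10 : L 1 ⟨1, _⟩ ≤ i + 1 := hL.2.2.2.1 ▸ hL.2.2.1 1 0 (by omega)
  have h11 : 2 * L 1 ⟨1, _⟩ ≤ (2 * k + 1) * t := two_mul_apply_one_le_of_mem_GTpat hL 1 (by omega)
  omega

end GTpat

/-- For `t > 2k+2` and `c = (t-1)(k+1) - 1`, `|G_{c+1}| ≤ |G_c|`. -/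
theorem stmt_14 (k t : ℕ) (ht : 2 * k + 2 < t) (c : ℕ)
    (hc : c = (t - 1) * (k + 1) - 1) :
    (GTpat k t (c + 1)).ncard ≤ (GTpat k t c).ncard := by
  apply ncard_GTpat_succ_le
  obtain ⟨s, rfl⟩ : ∃ s, t = s + 1 := ⟨t - 1, by omega⟩
  have : 1 ≤ s * (k + 1) := Nat.mul_pos (by omega) k.succ_pos
  rw [hc, Nat.add_sub_cancel, Nat.sub_add_cancel this]
  nlinarith
end
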